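/- Let H ∈ ℝ^{3×3} and let p₁, p₂, p₃, p₄ ∈ ℝ² with w_H(p_i) > 0 for i = 1,…,4. If the closed segments [p₁, p₂] and [p₃, p₄] intersect (segment ℝ p₁ p₂ ∩ segment ℝ p₃ p₄ ≠ ∅), then the closed segments [f_H(p₁), f_H(p₂)] and [f_H(p₃), f_H(p₄)] intersect as well. That is, two coplanar line segments that intersect appear as intersecting under the homography f_H. -/

import Mathlib

/-- The cross value of three points in the plane: the z-coordinate of the
cross product `(b - a) × (c - b)`. -/
noncomputable def cross (a b c : ℝ × ℝ) : ℝ :=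
  (b.1 - a.1) * (c.2 - b.2) - (b.2 - a.2) * (c.1 - b.1)

/-- The lift of a planar point `(x, y)` to `(x, y, 1) ∈ ℝ³`. -/
noncomputable def liftPt (p : ℝ × ℝ) : Fin 3 → ℝ := ![p.1, p.2, 1]

/-- The homography denominator: the third coordinate of `H ℓ(p)`. -/
noncomputable def wH (H : Matrix (Fin 3) (Fin 3) ℝ) (p : ℝ × ℝ) : ℝ :=
  H.mulVec (liftPt p) 2

/-- The planar homography induced by the matrix `H`. -/
noncomputable def fH (H : Matrix (Fin 3) (Fin 3) ℝ) (p : ℝ × ℝ) : ℝ × ℝ :=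
  (H.mulVec (liftPt p) 0 / wH H p, H.mulVec (liftPt p) 1 / wH H p)

/-!
In homogeneous coordinates `p ↦ H ℓ(p)` is affine, so it maps `[p, q]` onto the segment
`[H ℓ(p), H ℓ(q)]` of `ℝ³`. If the third coordinate `w` is positive at both ends, the central
projection `x ↦ x / w(x)` onto the plane `w = 1` maps that segment into the segment between the
projected endpoints: `a u + b v` goes to the combination of `u / w(u)` and `v / w(v)` with the
nonnegative weights `a w(u) / w(x)` and `b w(v) / w(x)`. Hence `f_H` maps segments into segments,
and a common point of `[p₁, p₂]` and `[p₃, p₄]` goes to a common point of their images.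
-/

open Matrix

theorem inv_smul_mem_segment {𝕜 V : Type*} [Field 𝕜] [LinearOrder 𝕜] [IsStrictOrderedRing 𝕜]
    [AddCommGroup V] [Module 𝕜 V] (w : V →ₗ[𝕜] 𝕜) {u v x : V} (hu : 0 < w u) (hv : 0 < w v)
    (hx : x ∈ segment 𝕜 u v) :
    (w x)⁻¹ • x ∈ segment 𝕜 ((w u)⁻¹ • u) ((w v)⁻¹ • v) := by
  obtain ⟨a, b, ha, hb, hab, rfl⟩ := hx
  have hw : w (a • u + b • v) = a * w u + b * w v := by simp
  have hpos : 0 < a * w u + b * w v := by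
    rcases ha.lt_or_eq with ha | rfl
    · positivity
    · obtain rfl : b = 1 := by simpa using hab
      simpa using hv
  rw [hw]
  refine ⟨a * w u / (a * w u + b * w v), b * w v / (a * w u + b * w v),
    by positivity, by positivity, by field_simp, ?_⟩
  simp only [smul_smul, smul_add]
  congr 2 <;> field_simp

theorem LinearMap.apply_mem_segment {𝕜 E F : Type*} [Semiring 𝕜] [PartialOrder 𝕜]
    [AddCommMonoid E] [Module 𝕜 E] [AddCommMonoid F] [Module 𝕜 F] (f : E →ₗ[𝕜] F) {a b x : E}
    (hx : x ∈ segment 𝕜 a b) : f x ∈ segment 𝕜 (f a) (f b) := by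
  obtain ⟨s, t, hs, ht, hst, rfl⟩ := hx
  exact ⟨s, t, hs, ht, hst, by simp⟩

theorem liftPt_mem_segment {p q r : ℝ × ℝ} (hr : r ∈ segment ℝ p q) :
    liftPt r ∈ segment ℝ (liftPt p) (liftPt q) := by
  obtain ⟨a, b, ha, hb, hab, rfl⟩ := hr
  refine ⟨a, b, ha, hb, hab, ?_⟩
  ext i
  fin_cases i <;> simp [liftPt, hab]

def planeProj : (Fin 3 → ℝ) →ₗ[ℝ] ℝ × ℝ := (LinearMap.proj 0).prod (LinearMap.proj 1)

theorem fH_eq_planeProj (H : Matrix (Fin 3) (Fin 3) ℝ) (p : ℝ × ℝ) :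
    fH H p = planeProj ((wH H p)⁻¹ • H *ᵥ liftPt p) := by
  simp [fH, planeProj, div_eq_inv_mul]

theorem fH_mem_segment {H : Matrix (Fin 3) (Fin 3) ℝ} {p q r : ℝ × ℝ}
    (hp : 0 < wH H p) (hq : 0 < wH H q) (hr : r ∈ segment ℝ p q) :
    fH H r ∈ segment ℝ (fH H p) (fH H q) := by
  have hHr : H *ᵥ liftPt r ∈ segment ℝ (H *ᵥ liftPt p) (H *ᵥ liftPt q) :=
    H.mulVecLin.apply_mem_segment (liftPt_mem_segment hr)
  rw [fH_eq_planeProj, fH_eq_planeProj, fH_eq_planeProj]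
  exact planeProj.apply_mem_segment
    (inv_smul_mem_segment (LinearMap.proj (R := ℝ) 2) hp hq hHr)

theorem fH_segments_intersect (H : Matrix (Fin 3) (Fin 3) ℝ)
    (p₁ p₂ p₃ p₄ : ℝ × ℝ)
    (h1 : 0 < wH H p₁) (h2 : 0 < wH H p₂) (h3 : 0 < wH H p₃) (h4 : 0 < wH H p₄)
    (hint : segment ℝ p₁ p₂ ∩ segment ℝ p₃ p₄ ≠ ∅) :
    segment ℝ (fH H p₁) (fH H p₂) ∩ segment ℝ (fH H p₃) (fH H p₄) ≠ ∅ := by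
  obtain ⟨q, hq₁₂, hq₃₄⟩ := Set.nonempty_iff_ne_empty.mpr hint
  exact Set.nonempty_iff_ne_empty.mp
    ⟨fH H q, fH_mem_segment h1 h2 hq₁₂, fH_mem_segment h3 h4 hq₃₄⟩
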